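/- arXiv:2104.12799 — 3 statements merged into one kernel-verified Lean document; each statement's English description precedes it below -/
import Mathlib

section
/- For every natural number N and all complex numbers α and x, one has ∑_{j=0}^{N} exp(α·(2j − N + 1)²) · sin((2j − N + 1)·x) = exp(α·(N + 1)²) · sin((N + 1)·x). -/
/-- For every `N : ℕ` and `α x : ℂ`,
`∑_{j=0}^{N} exp(α·(2j − N + 1)²) · sin((2j − N + 1)·x) = exp(α·(N + 1)²) · sin((N + 1)·x)`. -/
theorem sum_gaussian_mul_sin_odd_multiples (N : ℕ) (α x : ℂ) :
    ∑ j ∈ Finset.range (N + 1),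
      Complex.exp (α * (2 * (j : ℂ) - (N : ℂ) + 1) ^ 2) *
        Complex.sin ((2 * (j : ℂ) - (N : ℂ) + 1) * x) =
      Complex.exp (α * ((N : ℂ) + 1) ^ 2) * Complex.sin (((N : ℂ) + 1) * x) := by
  rw [Finset.sum_range_succ]
  set f : ℕ → ℂ := fun j => Complex.exp (α * (2 * (j : ℂ) - (N : ℂ) + 1) ^ 2) *
    Complex.sin ((2 * (j : ℂ) - (N : ℂ) + 1) * x) with hf
  have h0 : ∑ j ∈ Finset.range N, f j = 0 := by
    have h := Finset.sum_range_reflect f N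
    have h2 : ∀ j ∈ Finset.range N, f (N - 1 - j) = -f j := by
      intro j hj
      simp only [Finset.mem_range] at hj
      have hc : ((N - 1 - j : ℕ) : ℂ) = (N : ℂ) - 1 - j := by
        have : (N - 1 - j : ℕ) + 1 + j = N := by omega
        have := congrArg (Nat.cast : ℕ → ℂ) this
        push_cast at this
        linear_combination this
      simp only [hf, hc]
      have harg : 2 * ((N : ℂ) - 1 - j) - (N : ℂ) + 1 = -(2 * (j : ℂ) - (N : ℂ) + 1) := by ring
      rw [harg, neg_sq, neg_mul, Complex.sin_neg]
      ring
    rw [Finset.sum_congr rfl h2, Finset.sum_neg_distrib] at h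
    linear_combination -h/2
  rw [h0, zero_add]
  ring_nf
end

section
/- For every natural number N, every natural number l, and all complex numbers b and x, one has ∑_{j=0}^{N} [ (2j − N + 1 + 2b)^{2l} · sin((2j − N + 1 + 2b)·x) + (2j − N + 1 − 2b)^{2l} · sin((2j − N + 1 − 2b)·x) ] = (N + 1 + 2b)^{2l} · sin((N + 1 + 2b)·x) + (N + 1 − 2b)^{2l} · sin((N + 1 − 2b)·x). -/
/-- For every `N l : ℕ` and `b x : ℂ`,
`∑_{j=0}^{N} [(2j − N + 1 + 2b)^{2l}·sin((2j − N + 1 + 2b)·x)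
             + (2j − N + 1 − 2b)^{2l}·sin((2j − N + 1 − 2b)·x)]
 = (N + 1 + 2b)^{2l}·sin((N + 1 + 2b)·x) + (N + 1 − 2b)^{2l}·sin((N + 1 − 2b)·x)`. -/
theorem sum_pow_mul_sin_shifted_odd_multiples (N l : ℕ) (b x : ℂ) :
    ∑ j ∈ Finset.range (N + 1),
      ((2 * (j : ℂ) - (N : ℂ) + 1 + 2 * b) ^ (2 * l) *
          Complex.sin ((2 * (j : ℂ) - (N : ℂ) + 1 + 2 * b) * x) +
        (2 * (j : ℂ) - (N : ℂ) + 1 - 2 * b) ^ (2 * l) *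
          Complex.sin ((2 * (j : ℂ) - (N : ℂ) + 1 - 2 * b) * x)) =
      ((N : ℂ) + 1 + 2 * b) ^ (2 * l) * Complex.sin (((N : ℂ) + 1 + 2 * b) * x) +
        ((N : ℂ) + 1 - 2 * b) ^ (2 * l) * Complex.sin (((N : ℂ) + 1 - 2 * b) * x) := by
  set f : ℂ → ℂ := fun z => z ^ (2 * l) * Complex.sin (z * x) with hf
  have hodd : ∀ z : ℂ, f (-z) = - f z := by
    intro z
    simp only [hf]
    rw [(even_two_mul l).neg_pow, neg_mul, Complex.sin_neg]
    ring
  set G : ℕ → ℂ := fun k => f (2 * (k : ℂ) - (N : ℂ) - 1 + 2 * b) with hG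
  have step1 : ∑ j ∈ Finset.range (N + 1),
      ((2 * (j : ℂ) - (N : ℂ) + 1 + 2 * b) ^ (2 * l) *
          Complex.sin ((2 * (j : ℂ) - (N : ℂ) + 1 + 2 * b) * x) +
        (2 * (j : ℂ) - (N : ℂ) + 1 - 2 * b) ^ (2 * l) *
          Complex.sin ((2 * (j : ℂ) - (N : ℂ) + 1 - 2 * b) * x))
      = ∑ j ∈ Finset.range (N + 1),
          (f (2 * ((j : ℂ) + 1) - (N : ℂ) - 1 + 2 * b) - G (N - j)) := by
    apply Finset.sum_congr rfl
    intro j hj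
    have hjN : j ≤ N := Nat.lt_succ_iff.mp (Finset.mem_range.mp hj)
    have hcast : ((N - j : ℕ) : ℂ) = (N : ℂ) - (j : ℂ) := by
      push_cast [hjN]; ring
    have h2 : (2 * (j : ℂ) - (N : ℂ) + 1 - 2 * b)
        = -(2 * ((N - j : ℕ) : ℂ) - (N : ℂ) - 1 + 2 * b) := by
      rw [hcast]; ring
    have h3 : (2 * (j : ℂ) - (N : ℂ) + 1 + 2 * b)
        = 2 * ((j : ℂ) + 1) - (N : ℂ) - 1 + 2 * b := by ring
    rw [h2, h3]
    simp only [hG, hf]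
    rw [(even_two_mul l).neg_pow, neg_mul, Complex.sin_neg]
    ring
  rw [step1, Finset.sum_sub_distrib]
  have step2 : ∑ j ∈ Finset.range (N + 1), G (N - j)
      = ∑ j ∈ Finset.range (N + 1), G j := by
    have := Finset.sum_range_reflect G (N + 1)
    simpa using this
  rw [step2]
  have step3 : ∑ j ∈ Finset.range (N + 1), f (2 * ((j : ℂ) + 1) - (N : ℂ) - 1 + 2 * b)
      = ∑ j ∈ Finset.range (N + 1), G (j + 1) := by
    apply Finset.sum_congr rfl
    intro j _
    simp only [hG]
    push_cast
    ring_nf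
  rw [step3, ← Finset.sum_sub_distrib, Finset.sum_range_sub G (N + 1)]
  have hG0 : G 0 = - f ((N : ℂ) + 1 - 2 * b) := by
    have : (2 * ((0 : ℕ) : ℂ) - (N : ℂ) - 1 + 2 * b) = -((N : ℂ) + 1 - 2 * b) := by
      push_cast; ring
    simp only [hG, this, hodd]
  have hGN : G (N + 1) = f ((N : ℂ) + 1 + 2 * b) := by
    have : (2 * ((N + 1 : ℕ) : ℂ) - (N : ℂ) - 1 + 2 * b) = ((N : ℂ) + 1 + 2 * b) := by
      push_cast; ring
    simp only [hG, this]
  rw [hG0, hGN]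
  simp only [hf]
  ring
end

section
/- Let g be a natural number, Ω a symmetric g×g complex matrix whose imaginary part Im Ω is positive definite, a, b ∈ ℝ^g, and z ∈ ℂ^g. Then the function (Fin g → ℤ) → ℂ given by n ↦ exp(π·i·(n+a)ᵀ Ω (n+a) + 2π·i·(n+a)·(z+b)) is summable; that is, the series defining the genus-g Riemann theta function with characteristics θ[a,b](z,Ω) converges absolutely. -/
/-!
Write `y = n + a`. The modulus of the summand is `exp (-π yᵀ (Im Ω) y - 2π y · Im z)`. Since
`Im Ω` is positive definite, `yᵀ (Im Ω) y ≥ c ∑ yᵢ²` for some `c > 0` (minimum of the quadratic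
form on the unit sphere), and completing the square in each coordinate bounds the modulus by
`C ∏ᵢ exp (-(π c / 2) yᵢ²)`. This product of one-dimensional shifted Gaussians is summable over
`ℤ^g`, each factor being dominated by a Jacobi theta series.
-/

open Matrix

lemma exists_pos_mul_norm_sq_le {E : Type*} [NormedAddCommGroup E] [NormedSpace ℝ E]
    [FiniteDimensional ℝ E] {Q : E → ℝ} (hQ : Continuous Q)
    (hsmul : ∀ (t : ℝ) x, Q (t • x) = t ^ 2 * Q x) (hpos : ∀ x ≠ 0, 0 < Q x) :
    ∃ c > 0, ∀ x, c * ‖x‖ ^ 2 ≤ Q x := by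
  have hQ0 : Q 0 = 0 := by simpa using hsmul 0 0
  rcases subsingleton_or_nontrivial E with hE | hE
  · exact ⟨1, one_pos, fun x => by simp [Subsingleton.elim x 0, hQ0]⟩
  obtain ⟨u, hu, hmin⟩ := (isCompact_sphere (0 : E) 1).exists_isMinOn
    (NormedSpace.sphere_nonempty.mpr zero_le_one) hQ.continuousOn
  have hu0 : u ≠ 0 := ne_zero_of_mem_unit_sphere ⟨u, hu⟩
  refine ⟨Q u, hpos u hu0, fun x => ?_⟩
  rcases eq_or_ne x 0 with rfl | hx
  · simp [hQ0]
  have hr : ‖x‖ ≠ 0 := norm_ne_zero_iff.mpr hx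
  have hx1 : ‖x‖⁻¹ • x ∈ Metric.sphere (0 : E) 1 := by simp [norm_smul, hr]
  calc Q u * ‖x‖ ^ 2 ≤ Q (‖x‖⁻¹ • x) * ‖x‖ ^ 2 := by gcongr; exact hmin hx1
    _ = Q x := by rw [hsmul]; field_simp

lemma Matrix.PosDef.exists_pos_mul_sum_sq_le {n : Type*} [Fintype n] {N : Matrix n n ℝ}
    (hN : N.PosDef) : ∃ c > 0, ∀ x : n → ℝ, c * ∑ i, x i ^ 2 ≤ x ⬝ᵥ N *ᵥ x := by
  obtain ⟨c, hc, hcQ⟩ := exists_pos_mul_norm_sq_le (E := EuclideanSpace ℝ n)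
    (Q := fun x => x.ofLp ⬝ᵥ N *ᵥ x.ofLp) (by fun_prop)
    (fun t x => by
      simp only [WithLp.ofLp_smul, mulVec_smul, dotProduct_smul, smul_dotProduct, smul_eq_mul]
      ring)
    (fun x hx => by simpa using hN.dotProduct_mulVec_pos (x := x.ofLp) (by simpa using hx))
  refine ⟨c, hc, fun x => ?_⟩
  simpa [EuclideanSpace.real_norm_sq_eq] using hcQ (WithLp.toLp 2 x)

lemma summable_exp_neg_mul_int_add_sq {α : ℝ} (hα : 0 < α) (t : ℝ) :
    Summable fun m : ℤ => Real.exp (-α * (m + t) ^ 2) := by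
  have h := summable_pow_mul_jacobiTheta₂_term_bound 0 (div_pos hα Real.two_pi_pos) 0
  refine ((h.mul_left (Real.exp (α * t ^ 2))).of_nonneg_of_le (fun m => (Real.exp_pos _).le)
    fun m => ?_)
  rw [pow_zero, one_mul, ← Real.exp_add, Real.exp_le_exp]
  have hexp : -Real.pi * (α / (2 * Real.pi) * (m : ℝ) ^ 2 - 2 * 0 * |(m : ℝ)|) =
      -(α / 2) * (m : ℝ) ^ 2 := by
    field_simp
    ring
  rw [Int.cast_abs, hexp]
  nlinarith [mul_nonneg hα.le (sq_nonneg ((m : ℝ) + 2 * t))]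

lemma summable_fin_pi_prod_of_nonneg {α : Type*} :
    ∀ {g : ℕ} {f : Fin g → α → ℝ}, (∀ i m, 0 ≤ f i m) → (∀ i, Summable (f i)) →
      Summable fun x : Fin g → α => ∏ i, f i (x i)
  | 0, _, _, _ => .of_finite
  | g + 1, f, hf, hs => by
    have h := (hs 0).mul_of_nonneg
      (summable_fin_pi_prod_of_nonneg (fun i => hf i.succ) fun i => hs _)
      (hf 0) fun x => Finset.prod_nonneg fun i _ => hf _ _
    rw [← (Fin.consEquiv fun _ => α).summable_iff]
    exact h.congr fun p => by simp [Fin.consEquiv, Fin.prod_univ_succ]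

lemma summable_pi_prod_of_nonneg {ι α : Type*} [Fintype ι] {f : ι → α → ℝ}
    (hf : ∀ i m, 0 ≤ f i m) (hs : ∀ i, Summable (f i)) :
    Summable fun x : ι → α => ∏ i, f i (x i) := by
  let e := Fintype.equivFin ι
  rw [← (e.arrowCongr (Equiv.refl α)).symm.summable_iff]
  refine (summable_fin_pi_prod_of_nonneg (fun j => hf (e.symm j)) fun j => hs _).congr
    fun x => ?_
  simp only [Equiv.arrowCongr_symm, Equiv.arrowCongr_apply, Equiv.refl_symm, Equiv.coe_refl,
    Function.comp_apply, id, Equiv.symm_symm]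
  rw [← e.prod_comp]
  simp only [Equiv.symm_apply_apply]

lemma Complex.im_ofReal_dotProduct {n : Type*} [Fintype n] (y : n → ℝ) (w : n → ℂ) :
    ((fun i => (y i : ℂ)) ⬝ᵥ w).im = y ⬝ᵥ fun i => (w i).im := by
  simp [dotProduct, Complex.im_sum]

lemma Complex.im_ofReal_dotProduct_mulVec {n : Type*} [Fintype n] (y : n → ℝ)
    (Ω : Matrix n n ℂ) :
    ((fun i => (y i : ℂ)) ⬝ᵥ Ω *ᵥ fun i => (y i : ℂ)).im = y ⬝ᵥ Ω.map Complex.im *ᵥ y := by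
  simp [dotProduct, mulVec, Complex.im_sum, Finset.mul_sum]

lemma norm_exp_pi_I_quadratic_add_linear {n : Type*} [Fintype n] (Ω : Matrix n n ℂ)
    (y : n → ℝ) (w : n → ℂ) :
    ‖Complex.exp (Real.pi * Complex.I * ((fun i => (y i : ℂ)) ⬝ᵥ Ω *ᵥ fun i => (y i : ℂ)) +
        2 * Real.pi * Complex.I * ((fun i => (y i : ℂ)) ⬝ᵥ w))‖ =
      Real.exp (-Real.pi * (y ⬝ᵥ Ω.map Complex.im *ᵥ y) -
        2 * Real.pi * (y ⬝ᵥ fun i => (w i).im)) := by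
  rw [Complex.norm_exp, ← Complex.im_ofReal_dotProduct_mulVec, ← Complex.im_ofReal_dotProduct]
  simp only [Complex.add_re, Complex.mul_re, Complex.mul_im, Complex.ofReal_re, Complex.ofReal_im,
    Complex.I_re, Complex.I_im, Complex.re_ofNat, Complex.im_ofNat, Real.exp_eq_exp]
  ring

lemma neg_pi_mul_sub_le_sum_sq {n : Type*} [Fintype n] {c q : ℝ} (hc : 0 < c) (y v : n → ℝ)
    (hq : c * ∑ i, y i ^ 2 ≤ q) :
    -Real.pi * q - 2 * Real.pi * (y ⬝ᵥ v) ≤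
      ∑ i, (2 * Real.pi / c * v i ^ 2 + -(Real.pi * c / 2) * y i ^ 2) := by
  have hlin : -(2 * Real.pi * (y ⬝ᵥ v)) ≤
      ∑ i, (2 * Real.pi / c * v i ^ 2 + Real.pi * c / 2 * y i ^ 2) := by
    rw [dotProduct, Finset.mul_sum, ← Finset.sum_neg_distrib]
    refine Finset.sum_le_sum fun i _ => ?_
    field_simp
    nlinarith [sq_nonneg (c * y i + 2 * v i)]
  have hquad := mul_le_mul_of_nonneg_left hq Real.pi_pos.le
  simp only [Finset.sum_add_distrib, ← Finset.mul_sum] at hlin ⊢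
  nlinarith

theorem summable_riemannThetaChar_general (g : ℕ) (Ω : Matrix (Fin g) (Fin g) ℂ)
    (hIm : (Ω.map Complex.im).PosDef)
    (a b : Fin g → ℝ) (z : Fin g → ℂ) :
    Summable (fun n : Fin g → ℤ =>
      Complex.exp ((Real.pi : ℂ) * Complex.I *
          dotProduct (fun i => (n i : ℂ) + (a i : ℂ))
            (Ω.mulVec (fun i => (n i : ℂ) + (a i : ℂ))) +
        2 * (Real.pi : ℂ) * Complex.I *
          dotProduct (fun i => (n i : ℂ) + (a i : ℂ)) (fun i => z i + (b i : ℂ)))) := by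
  obtain ⟨c, hc, hcQ⟩ := hIm.exists_pos_mul_sum_sq_le
  have hgauss : ∀ i, Summable fun m : ℤ =>
      Real.exp (2 * Real.pi / c * (z i).im ^ 2) * Real.exp (-(Real.pi * c / 2) * (m + a i) ^ 2) :=
    fun i => (summable_exp_neg_mul_int_add_sq (by positivity) (a i)).mul_left _
  refine Summable.of_norm <| (summable_pi_prod_of_nonneg (fun _ _ => by positivity) hgauss)
    |>.of_nonneg_of_le (fun _ => norm_nonneg _) fun n => ?_
  have hy : (fun i => (n i : ℂ) + (a i : ℂ)) = fun i => (((n i : ℝ) + a i : ℝ) : ℂ) := by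
    push_cast
    rfl
  rw [hy, norm_exp_pi_I_quadratic_add_linear]
  simp only [← Real.exp_add, ← Real.exp_sum, Real.exp_le_exp, Complex.add_im,
    Complex.ofReal_im, add_zero]
  exact neg_pi_mul_sub_le_sum_sq hc _ _ (hcQ _)

/-- The series defining the genus-`g` Riemann theta function with characteristics
`θ[a,b](z,Ω)` converges absolutely, whenever `Ω` is symmetric with positive-definite
imaginary part. -/
theorem summable_riemannThetaChar (g : ℕ) (Ω : Matrix (Fin g) (Fin g) ℂ)
    (hΩ : Ω.IsSymm) (hIm : (Ω.map Complex.im).PosDef)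
    (a b : Fin g → ℝ) (z : Fin g → ℂ) :
    Summable (fun n : Fin g → ℤ =>
      Complex.exp ((Real.pi : ℂ) * Complex.I *
          dotProduct (fun i => (n i : ℂ) + (a i : ℂ))
            (Ω.mulVec (fun i => (n i : ℂ) + (a i : ℂ))) +
        2 * (Real.pi : ℂ) * Complex.I *
          dotProduct (fun i => (n i : ℂ) + (a i : ℂ)) (fun i => z i + (b i : ℂ)))) :=
  summable_riemannThetaChar_general g Ω hIm a b z
end
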